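/- For every ε ∈ (0,4], the set W_ε consisting of all finite products of ratios (ε+2m)/(ε+2n) with m,n ∈ ℕ (and, when ε > 2, also integer powers of (ε−2)/ε) is a countable subset of the positive reals that is dense in (0,∞). -/

import Mathlib

/-- The set W_ε of all finite products of ratios (ε+2m)/(ε+2n), m,n ∈ ℕ,
together with (when ε > 2) integer powers of (ε−2)/ε. -/
def Weps (ε : ℝ) : Set ℝ :=
  {x | ∃ (z : ℤ) (k : (ℕ × ℕ) →₀ ℕ), (ε ≤ 2 → z = 0) ∧
    x = ((ε - 2) / ε) ^ z *
      k.prod (fun p e => ((ε + 2 * (p.1 : ℝ)) / (ε + 2 * (p.2 : ℝ))) ^ e)}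

/-!
The ratios `(ε + 2(n+1)) / (ε + 2n) = 1 + 2 / (ε + 2n)` lie in `W_ε` together with all their
integer powers, are greater than `1` and tend to `1`. Given `0 < c < d`, choose such a ratio
`y < d / c`; the powers of `y` form a geometric progression whose consecutive terms differ by a
factor less than `d / c`, so one of them falls in `(c, d)`.
-/

open Set

theorem exists_zpow_mem_Ioo {K : Type*} [Semifield K] [LinearOrder K] [IsStrictOrderedRing K]
    [Archimedean K] [ExistsAddOfLE K] {c d y : K} (hc : 0 < c) (hy : 1 < y) (hyc : y * c < d) :
    ∃ m : ℤ, y ^ m ∈ Ioo c d := by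
  obtain ⟨m, hle, hlt⟩ := exists_mem_Ico_zpow hc hy
  refine ⟨m + 1, hlt, ?_⟩
  calc y ^ (m + 1) = y * y ^ m := by rw [zpow_add_one₀ (by positivity), mul_comm]
    _ ≤ y * c := by gcongr
    _ < d := hyc

theorem exists_add_two_div_lt {ε t : ℝ} (hε : 0 < ε) (ht : 1 < t) :
    ∃ n : ℕ, (ε + 2 * ((n : ℝ) + 1)) / (ε + 2 * n) < t := by
  obtain ⟨n, hn⟩ := exists_nat_gt (2 / (t - 1))
  refine ⟨n, ?_⟩
  have hpos : 0 < ε + 2 * (n : ℝ) := by positivity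
  rw [div_lt_iff₀ hpos]
  rw [div_lt_iff₀ (by linarith)] at hn
  nlinarith

namespace Weps

variable {ε : ℝ}

theorem countable : (Weps ε).Countable := by
  refine (countable_range fun p : ℤ × ((ℕ × ℕ) →₀ ℕ) => ((ε - 2) / ε) ^ p.1 *
    p.2.prod fun q e => ((ε + 2 * (q.1 : ℝ)) / (ε + 2 * (q.2 : ℝ))) ^ e).mono ?_
  rintro x ⟨z, k, -, rfl⟩
  exact ⟨(z, k), rfl⟩

theorem subset_Ioi (hε : 0 < ε) : Weps ε ⊆ Ioi 0 := by
  rintro x ⟨z, k, hz, rfl⟩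
  have hprod : 0 < k.prod fun q e => ((ε + 2 * (q.1 : ℝ)) / (ε + 2 * (q.2 : ℝ))) ^ e :=
    Finset.prod_pos fun q _ => by positivity
  rcases le_or_gt ε 2 with h | h
  · simpa [hz h] using hprod
  · have : 0 < (ε - 2) / ε := div_pos (by linarith) hε
    exact mul_pos (zpow_pos this z) hprod

theorem ratio_pow_mem (m n e : ℕ) : ((ε + 2 * (m : ℝ)) / (ε + 2 * n)) ^ e ∈ Weps ε :=
  ⟨0, Finsupp.single (m, n) e, fun _ => rfl, by
    rw [Finsupp.prod_single_index (by simp), zpow_zero, one_mul]⟩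

theorem ratio_succ_zpow_mem (n : ℕ) (k : ℤ) :
    ((ε + 2 * ((n : ℝ) + 1)) / (ε + 2 * n)) ^ k ∈ Weps ε := by
  obtain ⟨e, rfl | rfl⟩ := k.eq_nat_or_neg
  · simpa using ratio_pow_mem (ε := ε) (n + 1) n e
  · simpa [zpow_neg, ← inv_pow, inv_div] using ratio_pow_mem (ε := ε) n (n + 1) e

end Weps

theorem Weps_countable_subset_dense_general (ε : ℝ) (hε0 : 0 < ε) :
    (Weps ε).Countable ∧ Weps ε ⊆ Set.Ioi (0 : ℝ) ∧
    ∀ c d : ℝ, 0 < c → c < d → ∃ x ∈ Weps ε, c < x ∧ x < d := by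
  refine ⟨Weps.countable, Weps.subset_Ioi hε0, fun c d hc hcd => ?_⟩
  obtain ⟨n, hn⟩ := exists_add_two_div_lt hε0 ((one_lt_div hc).2 hcd)
  have hpos : 0 < ε + 2 * (n : ℝ) := by positivity
  have hy : 1 < (ε + 2 * ((n : ℝ) + 1)) / (ε + 2 * n) := by
    rw [one_lt_div hpos]; linarith
  obtain ⟨m, hm⟩ := exists_zpow_mem_Ioo hc hy ((lt_div_iff₀ hc).1 hn)
  exact ⟨_, Weps.ratio_succ_zpow_mem n m, hm⟩

/-- For every ε ∈ (0,4], the set W_ε is a countable subset of the positive reals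
that is dense in (0,∞). -/
theorem Weps_countable_subset_dense (ε : ℝ) (hε0 : 0 < ε) (hε4 : ε ≤ 4) :
    (Weps ε).Countable ∧ Weps ε ⊆ Set.Ioi (0 : ℝ) ∧
    ∀ c d : ℝ, 0 < c → c < d → ∃ x ∈ Weps ε, c < x ∧ x < d :=
  Weps_countable_subset_dense_general ε hε0
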